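/- arXiv:2502.12037 — 6 statements merged into one kernel-verified Lean document; each statement's English description precedes it below -/
import Mathlib

section
/- Let a ∈ (0,2) with a ≠ 1, let λ > 0 and μ > 0, and let p, q be real numbers with p + q = 1 and pλ + qμ > 0. Then the function x ↦ (p·exp(−λx) + q·exp(−μx) − exp(−(pλ+qμ)x))·x^(−a−1) is integrable on (0,∞) and ∫₀^∞ (p·exp(−λx) + q·exp(−μx) − exp(−(pλ+qμ)x))·x^(−a−1) dx = Γ(−a)·(p·λ^a + q·μ^a − (pλ+qμ)^a). -/
/-!
Write the integrand as `g x * x ^ (-a - 1)` with `g = ∑ cᵢ exp (-rᵢ x)` an exponential sum whose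
coefficients satisfy `∑ cᵢ = ∑ cᵢ rᵢ = 0` (here `c = (p, q, -1)`, `r = (l, m, p l + q m)`).
Factoring out `exp (-k x)` with `k = min rᵢ` and using these two vanishing moments gives
`|g x| ≤ C x² exp (-k x)` and `|g' x| ≤ C x exp (-k x)`. These bounds make two integrations by
parts legitimate for every `a ∈ (0, 2) \ {1}`, with vanishing boundary terms, turning the integral
into `1 / (a (a - 1))` times `∫ g'' x ^ (1 - a)`, a sum of Gamma integrals equal to
`Γ(2 - a) ∑ cᵢ rᵢ ^ a`. Finally `Γ(2 - a) = (1 - a) (-a) Γ(-a)`.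
-/

open MeasureTheory Real Set Filter Topology

lemma abs_exp_neg_sub_one_le {u : ℝ} (hu : 0 ≤ u) : |exp (-u) - 1| ≤ u := by
  rw [abs_sub_comm, abs_of_nonneg (sub_nonneg.2 (exp_le_one_iff.2 (neg_nonpos.2 hu)))]
  linarith [add_one_le_exp (-u)]

lemma abs_exp_neg_sub_one_add_le {u : ℝ} (hu : 0 ≤ u) : |exp (-u) - 1 + u| ≤ u ^ 2 / 2 := by
  have hlow : 0 ≤ exp (-u) - 1 + u := by linarith [add_one_le_exp (-u)]
  -- `(1 - u + u²/2) (1 + u + u²/2) = 1 + u⁴/4 ≥ 1 = exp (-u) exp u`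
  have hup : exp (-u) ≤ 1 - u + u ^ 2 / 2 := by
    have hprod : exp (-u) * exp u = 1 := by rw [← exp_add, neg_add_cancel, exp_zero]
    nlinarith [quadratic_le_exp_of_nonneg hu, exp_pos (-u), pow_nonneg hu 4]
  rw [abs_of_nonneg hlow]
  linarith

lemma Gamma_two_sub {a : ℝ} (ha₀ : a ≠ 0) (ha₁ : a ≠ 1) :
    Gamma (2 - a) = (1 - a) * (-a) * Gamma (-a) := by
  rw [show 2 - a = -a + 1 + 1 by ring, Gamma_add_one (by contrapose! ha₁; linarith),
    Gamma_add_one (neg_ne_zero.2 ha₀)]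
  ring

lemma exp_neg_mul_eq_mul_exp_neg_sub_mul (r k x : ℝ) :
    exp (-(r * x)) = exp (-(k * x)) * exp (-((r - k) * x)) := by
  rw [← exp_add]
  ring_nf

lemma exists_pos_forall_le_of_forall_pos {ι : Type*} {s : Finset ι} {r : ι → ℝ}
    (hr : ∀ i ∈ s, 0 < r i) : ∃ k, 0 < k ∧ ∀ i ∈ s, k ≤ r i := by
  let t := insert 1 (s.image r)
  refine ⟨t.min' (Finset.insert_nonempty _ _), (Finset.lt_min'_iff _ _).2 fun y hy => ?_,
    fun i hi => t.min'_le _ (Finset.mem_insert_of_mem (Finset.mem_image_of_mem r hi))⟩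
  obtain rfl | ⟨i, hi, rfl⟩ := by simpa [t] using hy
  exacts [one_pos, hr i hi]

lemma integrableOn_rpow_mul_exp_neg_mul {t k : ℝ} (ht : -1 < t) (hk : 0 < k) :
    IntegrableOn (fun x : ℝ => x ^ t * exp (-(k * x))) (Ioi 0) := by
  simpa [rpow_one, neg_mul] using integrableOn_rpow_mul_exp_neg_mul_rpow ht zero_lt_one hk

section PowerExpDomination

variable {f : ℝ → ℝ} {n : ℕ} {b C k : ℝ}

lemma norm_mul_rpow_le (hbound : ∀ x, 0 < x → |f x| ≤ C * x ^ n * exp (-(k * x))) {x : ℝ}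
    (hx : 0 < x) : ‖f x * x ^ b‖ ≤ C * (x ^ (n + b) * exp (-(k * x))) := by
  rw [norm_mul, norm_of_nonneg (rpow_nonneg hx.le b), rpow_add hx, rpow_natCast]
  calc |f x| * x ^ b ≤ C * x ^ n * exp (-(k * x)) * x ^ b := by
        gcongr
        exact hbound x hx
    _ = C * (x ^ n * x ^ b * exp (-(k * x))) := by ring

lemma integrableOn_mul_rpow_of_abs_le (hf : Continuous f) (hk : 0 < k) (hnb : -1 < n + b)
    (hbound : ∀ x, 0 < x → |f x| ≤ C * x ^ n * exp (-(k * x))) :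
    IntegrableOn (fun x => f x * x ^ b) (Ioi 0) := by
  refine ((integrableOn_rpow_mul_exp_neg_mul hnb hk).const_mul C).mono' ?_ ?_
  · refine ContinuousOn.aestronglyMeasurable (fun x hx => ?_) measurableSet_Ioi
    exact hf.continuousAt.continuousWithinAt.mul
      (continuousAt_rpow_const x b (Or.inl (ne_of_gt hx))).continuousWithinAt
  · filter_upwards [ae_restrict_mem measurableSet_Ioi] with x hx
    exact norm_mul_rpow_le hbound hx

lemma tendsto_mul_rpow_nhdsGT_zero_of_abs_le (hnb : 0 < n + b)
    (hbound : ∀ x, 0 < x → |f x| ≤ C * x ^ n * exp (-(k * x))) :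
    Tendsto (fun x => f x * x ^ b) (𝓝[>] 0) (𝓝 0) := by
  refine squeeze_zero_norm'
    (eventually_nhdsWithin_of_forall fun x hx => norm_mul_rpow_le hbound hx) ?_
  have hcont : ContinuousAt (fun x : ℝ => C * (x ^ (n + b) * exp (-(k * x)))) 0 :=
    continuousAt_const.mul ((continuousAt_rpow_const 0 _ (Or.inr hnb.le)).mul (by fun_prop))
  simpa [zero_rpow hnb.ne'] using hcont.tendsto.mono_left nhdsWithin_le_nhds

lemma tendsto_mul_rpow_atTop_of_abs_le (hk : 0 < k)
    (hbound : ∀ x, 0 < x → |f x| ≤ C * x ^ n * exp (-(k * x))) :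
    Tendsto (fun x => f x * x ^ b) atTop (𝓝 0) := by
  refine squeeze_zero_norm'
    ((eventually_gt_atTop 0).mono fun x hx => norm_mul_rpow_le hbound hx) ?_
  simpa [neg_mul] using (tendsto_rpow_mul_exp_neg_mul_atTop_nhds_zero (n + b) k hk).const_mul C

end PowerExpDomination

theorem integral_Ioi_mul_rpow_sub_one {g g' : ℝ → ℝ} {b : ℝ} (hb : b ≠ 0)
    (hg : ∀ x ∈ Ioi 0, HasDerivAt g (g' x) x)
    (hint : IntegrableOn (fun x => g x * x ^ (b - 1)) (Ioi 0))
    (hint' : IntegrableOn (fun x => g' x * x ^ b) (Ioi 0))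
    (h_zero : Tendsto (fun x => g x * x ^ b) (𝓝[>] 0) (𝓝 0))
    (h_top : Tendsto (fun x => g x * x ^ b) atTop (𝓝 0)) :
    ∫ x in Ioi 0, g x * x ^ (b - 1) = -b⁻¹ * ∫ x in Ioi 0, g' x * x ^ b := by
  have hv : ∀ x ∈ Ioi (0 : ℝ), HasDerivAt (fun y => b⁻¹ * y ^ b) (x ^ (b - 1)) x := fun x hx =>
    ((hasDerivAt_rpow_const (Or.inl (ne_of_gt hx))).const_mul b⁻¹).congr_deriv
      (by field_simp)
  have h := integral_Ioi_mul_deriv_eq_deriv_mul hg hv hint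
    (by simp only [Pi.mul_def, mul_left_comm _ b⁻¹]; exact hint'.const_mul b⁻¹)
    (by simpa only [Pi.mul_def, mul_left_comm _ b⁻¹, mul_zero] using h_zero.const_mul b⁻¹)
    (by simpa only [Pi.mul_def, mul_left_comm _ b⁻¹, mul_zero] using h_top.const_mul b⁻¹)
  simp only [mul_left_comm _ b⁻¹, integral_const_mul] at h
  rw [h]
  ring

noncomputable def expSum {ι : Type*} (s : Finset ι) (c r : ι → ℝ) (x : ℝ) : ℝ :=
  ∑ i ∈ s, c i * exp (-(r i * x))

namespace expSum

variable {ι : Type*} (s : Finset ι) (c r : ι → ℝ)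

theorem hasDerivAt (x : ℝ) :
    HasDerivAt (expSum s c r) (expSum s (fun i => -(c i * r i)) r x) x := by
  unfold expSum
  refine (HasDerivAt.fun_sum fun i _ =>
    (((hasDerivAt_id x).const_mul (r i)).neg.exp).const_mul (c i)).congr_deriv
    (Finset.sum_congr rfl fun i _ => ?_)
  simp only [Pi.neg_apply, id, mul_one]
  ring

theorem continuous : Continuous (expSum s c r) := by
  unfold expSum
  fun_prop

variable {s c r} {k x : ℝ}

theorem abs_le_of_sum_eq_zero (hc : ∑ i ∈ s, c i = 0) (hr : ∀ i ∈ s, k ≤ r i) (hx : 0 ≤ x) :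
    |expSum s c r x| ≤ (∑ i ∈ s, |c i| * (r i - k)) * x * exp (-(k * x)) := by
  have hrepr : expSum s c r x = exp (-(k * x)) * ∑ i ∈ s, c i * (exp (-((r i - k) * x)) - 1) := by
    have h : ∀ i ∈ s, c i * exp (-(r i * x)) =
        exp (-(k * x)) * (c i * (exp (-((r i - k) * x)) - 1)) + exp (-(k * x)) * c i := by
      intro i _
      rw [exp_neg_mul_eq_mul_exp_neg_sub_mul (r i) k x]
      ring
    rw [expSum, Finset.sum_congr rfl h, Finset.sum_add_distrib, ← Finset.mul_sum,
      ← Finset.mul_sum, hc, mul_zero, add_zero]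
  rw [hrepr, abs_mul, abs_of_pos (exp_pos _), mul_comm]
  gcongr
  refine (Finset.abs_sum_le_sum_abs _ _).trans ?_
  rw [Finset.sum_mul]
  refine Finset.sum_le_sum fun i hi => ?_
  rw [abs_mul, mul_assoc]
  gcongr
  exact abs_exp_neg_sub_one_le (mul_nonneg (sub_nonneg.2 (hr i hi)) hx)

theorem abs_le_of_sum_eq_zero_of_sum_mul_eq_zero (hc₀ : ∑ i ∈ s, c i = 0)
    (hc₁ : ∑ i ∈ s, c i * r i = 0) (hr : ∀ i ∈ s, k ≤ r i) (hx : 0 ≤ x) :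
    |expSum s c r x| ≤ (∑ i ∈ s, |c i| * (r i - k) ^ 2 / 2) * x ^ 2 * exp (-(k * x)) := by
  have hrepr : expSum s c r x =
      exp (-(k * x)) * ∑ i ∈ s, c i * (exp (-((r i - k) * x)) - 1 + (r i - k) * x) := by
    have h : ∀ i ∈ s, c i * exp (-(r i * x)) =
        exp (-(k * x)) * (c i * (exp (-((r i - k) * x)) - 1 + (r i - k) * x))
          + ((1 + k * x) * exp (-(k * x)) * c i - x * exp (-(k * x)) * (c i * r i)) := by
      intro i _
      rw [exp_neg_mul_eq_mul_exp_neg_sub_mul (r i) k x]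
      ring
    rw [expSum, Finset.sum_congr rfl h, Finset.sum_add_distrib, Finset.sum_sub_distrib,
      ← Finset.mul_sum, ← Finset.mul_sum, ← Finset.mul_sum, hc₀, hc₁]
    ring
  rw [hrepr, abs_mul, abs_of_pos (exp_pos _), mul_comm]
  gcongr
  refine (Finset.abs_sum_le_sum_abs _ _).trans ?_
  rw [Finset.sum_mul]
  refine Finset.sum_le_sum fun i hi => ?_
  rw [abs_mul, mul_div_assoc, mul_assoc]
  gcongr
  exact (abs_exp_neg_sub_one_add_le (mul_nonneg (sub_nonneg.2 (hr i hi)) hx)).trans_eq (by ring)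

theorem integrableOn_mul_rpow (hr : ∀ i ∈ s, 0 < r i) {t : ℝ} (ht : -1 < t) :
    IntegrableOn (fun x => expSum s c r x * x ^ t) (Ioi 0) := by
  simp only [expSum, Finset.sum_mul]
  exact integrable_finsetSum _ fun i hi => by
    simpa only [mul_assoc, mul_comm (exp _)] using
      (integrableOn_rpow_mul_exp_neg_mul ht (hr i hi)).const_mul (c i)

theorem integral_mul_rpow_sub_one (hr : ∀ i ∈ s, 0 < r i) {b : ℝ} (hb : 0 < b) :
    ∫ x in Ioi 0, expSum s c r x * x ^ (b - 1) = Gamma b * ∑ i ∈ s, c i * r i ^ (-b) := by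
  have hterm : ∀ i ∈ s, IntegrableOn (fun x => c i * (x ^ (b - 1) * exp (-(r i * x)))) (Ioi 0) :=
    fun i hi => (integrableOn_rpow_mul_exp_neg_mul (by linarith) (hr i hi)).const_mul (c i)
  simp only [expSum, Finset.sum_mul, mul_assoc, mul_comm (exp _)]
  rw [integral_finsetSum _ hterm, Finset.mul_sum]
  refine Finset.sum_congr rfl fun i hi => ?_
  rw [integral_const_mul, integral_rpow_mul_exp_neg_mul_Ioi hb (hr i hi), one_div,
    inv_rpow (hr i hi).le, ← rpow_neg (hr i hi).le]
  ring

theorem integral_mul_rpow_neg_sub_one (hr : ∀ i ∈ s, 0 < r i) (hc₀ : ∑ i ∈ s, c i = 0)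
    (hc₁ : ∑ i ∈ s, c i * r i = 0) {a : ℝ} (ha₀ : 0 < a) (ha₂ : a < 2) (ha₁ : a ≠ 1) :
    IntegrableOn (fun x => expSum s c r x * x ^ (-a - 1)) (Ioi 0) ∧
      ∫ x in Ioi 0, expSum s c r x * x ^ (-a - 1) = Gamma (-a) * ∑ i ∈ s, c i * r i ^ a := by
  obtain ⟨k, hk, hkr⟩ := exists_pos_forall_le_of_forall_pos hr
  set c' : ι → ℝ := fun i => -(c i * r i)
  set c'' : ι → ℝ := fun i => -(c' i * r i)
  have hc'₀ : ∑ i ∈ s, c' i = 0 := by simp only [c', Finset.sum_neg_distrib, hc₁, neg_zero]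
  have hbound : ∀ x, 0 < x →
      |expSum s c r x| ≤ (∑ i ∈ s, |c i| * (r i - k) ^ 2 / 2) * x ^ 2 * exp (-(k * x)) :=
    fun x hx => abs_le_of_sum_eq_zero_of_sum_mul_eq_zero hc₀ hc₁ hkr hx.le
  have hbound' : ∀ x, 0 < x →
      |expSum s c' r x| ≤ (∑ i ∈ s, |c' i| * (r i - k)) * x ^ 1 * exp (-(k * x)) :=
    fun x hx => by simpa only [pow_one] using abs_le_of_sum_eq_zero hc'₀ hkr hx.le
  have hint := integrableOn_mul_rpow_of_abs_le (b := -a - 1) (continuous s c r) hk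
    (by push_cast; linarith) hbound
  have hibp₁ := integral_Ioi_mul_rpow_sub_one (neg_ne_zero.2 ha₀.ne')
    (fun x _ => hasDerivAt s c r x)
    hint (integrableOn_mul_rpow_of_abs_le (continuous s c' r) hk (by push_cast; linarith)
      hbound')
    (tendsto_mul_rpow_nhdsGT_zero_of_abs_le (by push_cast; linarith) hbound)
    (tendsto_mul_rpow_atTop_of_abs_le hk hbound)
  have hibp₂ := integral_Ioi_mul_rpow_sub_one (sub_ne_zero.2 ha₁.symm)
    (fun x _ => hasDerivAt s c' r x)
    (integrableOn_mul_rpow_of_abs_le (continuous s c' r) hk (by push_cast; linarith) hbound')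
    (integrableOn_mul_rpow hr (by linarith))
    (tendsto_mul_rpow_nhdsGT_zero_of_abs_le (by push_cast; linarith) hbound')
    (tendsto_mul_rpow_atTop_of_abs_le hk hbound')
  have hgamma := integral_mul_rpow_sub_one (c := c'') hr (show 0 < 2 - a by linarith)
  rw [sub_sub_cancel_left] at hibp₂
  rw [show 2 - a - 1 = 1 - a by ring] at hgamma
  have hsum : ∑ i ∈ s, c'' i * r i ^ (-(2 - a)) = ∑ i ∈ s, c i * r i ^ a := by
    refine Finset.sum_congr rfl fun i hi => ?_
    rw [show -(2 - a) = a - 2 by ring, rpow_sub (hr i hi), rpow_two]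
    field_simp [(hr i hi).ne']
    ring
  refine ⟨hint, ?_⟩
  rw [hibp₁, hibp₂, hgamma, hsum, Gamma_two_sub ha₀.ne' ha₁]
  field_simp [sub_ne_zero.2 ha₁.symm]

end expSum

/-- Positive half-line building block of the α-divergence between two
exponentially tempered stable (GTS/CTS) Lévy processes. -/
theorem gts_alpha_divergence_halfline (a l m p q : ℝ)
    (ha₀ : 0 < a) (ha₂ : a < 2) (ha₁ : a ≠ 1)
    (hl : 0 < l) (hm : 0 < m) (hpq : p + q = 1) (hmix : 0 < p * l + q * m) :
    IntegrableOn
      (fun x : ℝ =>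
        (p * exp (-(l * x)) + q * exp (-(m * x)) - exp (-((p * l + q * m) * x)))
          * x ^ (-a - 1)) (Ioi 0) ∧
    ∫ x in Ioi (0:ℝ),
        (p * exp (-(l * x)) + q * exp (-(m * x)) - exp (-((p * l + q * m) * x)))
          * x ^ (-a - 1)
      = Gamma (-a) * (p * l ^ a + q * m ^ a - (p * l + q * m) ^ a) := by
  let c : Fin 3 → ℝ := ![p, q, -1]
  let r : Fin 3 → ℝ := ![l, m, p * l + q * m]
  have hr : ∀ i ∈ Finset.univ, 0 < r i := by simp [r, Fin.forall_fin_succ, hl, hm, hmix]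
  have hexpSum : expSum Finset.univ c r =
      fun x => p * exp (-(l * x)) + q * exp (-(m * x)) - exp (-((p * l + q * m) * x)) := by
    ext x
    simp only [expSum, Fin.sum_univ_three, Fin.isValue, Matrix.cons_val_zero,
      Matrix.cons_val_one, Matrix.cons_val, c, r]
    ring
  have hc₀ : ∑ i, c i = 0 := by simp [Fin.sum_univ_three, c, hpq]
  have hc₁ : ∑ i, c i * r i = 0 := by simp [Fin.sum_univ_three, c, r]
  have h := expSum.integral_mul_rpow_neg_sub_one hr hc₀ hc₁ ha₀ ha₂ ha₁
  simp only [hexpSum, Fin.sum_univ_three] at h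
  simpa [c, r, sub_eq_add_neg] using h
end

section
/- Let a ∈ (0,2) with a ≠ 1 and let λ > 0, μ > 0. Then the function x ↦ (exp(−λx)·(−(λ−μ)x − 1) + exp(−μx))·x^(−a−1) is integrable on (0,∞) and ∫₀^∞ (exp(−λx)·(−(λ−μ)x − 1) + exp(−μx))·x^(−a−1) dx = Γ(−a)·((a−1)·λ^a − a·μ·λ^(a−1) + μ^a). -/
open MeasureTheory Real Set

/-! The integrand is `x ^ (-a - 1)` times the first-order Taylor remainder of `exp` at `-l x`,
so by the integral form of the remainder it equals
`(m - l)² ∫₀¹ (1 - t) x ^ (1 - a) exp (-(l + t (m - l)) x) dt`.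
After swapping the integrals (everything is nonnegative), the `x`-integral is
`Γ(2 - a) (l + t (m - l)) ^ (a - 2)`, and the remaining `t`-integral is again an integral Taylor
remainder, now of `φ x = x ^ a / (a (a - 1))`, whose second derivative is `x ^ (a - 2)`.
It remains to use `Γ(2 - a) = a (a - 1) Γ(-a)`. -/

theorem taylor_integral_remainder_one_of_hasDerivAt {f f' f'' : ℝ → ℝ} {s : Set ℝ}
    (hs : Convex ℝ s) {y h : ℝ} (hy : y ∈ s) (hyh : y + h ∈ s)
    (hf : ∀ x ∈ s, HasDerivAt f (f' x) x) (hf' : ∀ x ∈ s, HasDerivAt f' (f'' x) x)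
    (hf'' : ContinuousOn f'' s) :
    f (y + h) - f y - f' y * h = ∫ t in (0:ℝ)..1, h ^ 2 * (1 - t) * f'' (y + t * h) := by
  have hmem : ∀ t ∈ uIcc (0:ℝ) 1, y + t * h ∈ s := fun t ht => by
    rw [uIcc_of_le zero_le_one] at ht
    simpa using hs.add_smul_sub_mem hy hyh ht
  have hline (t : ℝ) : HasDerivAt (fun t => y + t * h) h t := by
    simpa using ((hasDerivAt_id t).mul_const h).const_add y
  have hderiv : ∀ t ∈ uIcc (0:ℝ) 1,
      HasDerivAt (fun t => f (y + t * h) + (1 - t) * h * f' (y + t * h))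
        (h ^ 2 * (1 - t) * f'' (y + t * h)) t := fun t ht => by
    have hf_t := (hf _ (hmem t ht)).comp t (hline t)
    have hf'_t := (hf' _ (hmem t ht)).comp t (hline t)
    refine (hf_t.add ((((hasDerivAt_id t).const_sub 1).mul_const h).mul hf'_t)).congr_deriv ?_
    simp only [Function.comp_apply, id_eq]
    ring
  have hcont : ContinuousOn (fun t => h ^ 2 * (1 - t) * f'' (y + t * h)) (uIcc 0 1) :=
    (continuousOn_const.mul (continuousOn_const.sub continuousOn_id)).mul
      (hf''.comp (by fun_prop) hmem)
  rw [intervalIntegral.integral_eq_sub_of_hasDerivAt hderiv hcont.intervalIntegrable]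
  simp only [one_mul, sub_self, zero_mul, add_zero, sub_zero]
  ring

theorem exp_add_sub_exp_sub_mul_eq_integral (y h : ℝ) :
    exp (y + h) - exp y - exp y * h = ∫ t in (0:ℝ)..1, h ^ 2 * (1 - t) * exp (y + t * h) :=
  taylor_integral_remainder_one_of_hasDerivAt convex_univ (mem_univ y) (mem_univ _)
    (fun x _ => hasDerivAt_exp x) (fun x _ => hasDerivAt_exp x) continuous_exp.continuousOn

theorem rpow_taylor_remainder_eq_integral {a l m : ℝ} (ha₀ : a ≠ 0) (ha₁ : a ≠ 1)
    (hl : 0 < l) (hm : 0 < m) :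
    m ^ a / (a * (a - 1)) - l ^ a / (a * (a - 1)) - l ^ (a - 1) / (a - 1) * (m - l)
      = ∫ t in (0:ℝ)..1, (m - l) ^ 2 * (1 - t) * (l + t * (m - l)) ^ (a - 2) := by
  have ha₁' : a - 1 ≠ 0 := sub_ne_zero.2 ha₁
  have hf : ∀ x ∈ Ioi (0:ℝ), HasDerivAt (fun x => x ^ a / (a * (a - 1)))
      (x ^ (a - 1) / (a - 1)) x := fun x hx => by
    refine ((hasDerivAt_rpow_const (Or.inl (ne_of_gt hx))).div_const _).congr_deriv ?_
    field_simp
  have hf' : ∀ x ∈ Ioi (0:ℝ), HasDerivAt (fun x => x ^ (a - 1) / (a - 1)) (x ^ (a - 2)) x :=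
    fun x hx => by
      refine ((hasDerivAt_rpow_const (Or.inl (ne_of_gt hx))).div_const _).congr_deriv ?_
      rw [show a - 1 - 1 = a - 2 by ring]
      field_simp
  simpa using taylor_integral_remainder_one_of_hasDerivAt (convex_Ioi 0) hl
    (show l + (m - l) ∈ Ioi 0 by simpa using hm) hf hf'
    (continuousOn_id.rpow_const fun x hx => Or.inl (ne_of_gt hx))

theorem add_mul_sub_pos_of_mem_Icc {l m t : ℝ} (hl : 0 < l) (hm : 0 < m) (ht : t ∈ Icc 0 1) :
    0 < l + t * (m - l) := by
  simpa using (convex_Ioi (0:ℝ)).add_smul_sub_mem hl hm ht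

theorem integrableOn_rpow_mul_exp_neg_mul_Ioi {s b : ℝ} (hs : -1 < s) (hb : 0 < b) :
    IntegrableOn (fun x : ℝ => x ^ s * exp (-(b * x))) (Ioi 0) := by
  simpa using integrableOn_rpow_mul_exp_neg_mul_rpow hs zero_lt_one hb

theorem integral_rpow_one_sub_mul_exp_neg_mul_Ioi {a b : ℝ} (ha : a < 2) (hb : 0 < b) :
    ∫ x in Ioi (0:ℝ), x ^ (1 - a) * exp (-(b * x)) = Gamma (2 - a) * b ^ (a - 2) := by
  have := integral_rpow_mul_exp_neg_mul_Ioi (a := 2 - a) (by linarith) hb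
  rw [show 2 - a - 1 = 1 - a by ring] at this
  rw [this, one_div, inv_rpow hb.le, ← rpow_neg hb.le, neg_sub, mul_comm]

noncomputable def temperedKernel (a l m x t : ℝ) : ℝ :=
  (1 - t) * (x ^ (1 - a) * exp (-((l + t * (m - l)) * x)))

theorem integral_temperedKernel {a l m t : ℝ} (ha : a < 2) (hl : 0 < l) (hm : 0 < m)
    (ht : t ∈ Icc 0 1) :
    ∫ x in Ioi (0:ℝ), temperedKernel a l m x t
      = (1 - t) * (Gamma (2 - a) * (l + t * (m - l)) ^ (a - 2)) := by
  simp only [temperedKernel]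
  rw [integral_const_mul, integral_rpow_one_sub_mul_exp_neg_mul_Ioi ha
    (add_mul_sub_pos_of_mem_Icc hl hm ht)]

theorem integrable_uncurry_temperedKernel {a l m : ℝ} (ha : a < 2) (hl : 0 < l) (hm : 0 < m) :
    Integrable (Function.uncurry (temperedKernel a l m))
      ((volume.restrict (Ioi 0)).prod (volume.restrict (Ioc 0 1))) := by
  have hb : ∀ t ∈ Icc (0:ℝ) 1, 0 < l + t * (m - l) := fun t ht =>
    add_mul_sub_pos_of_mem_Icc hl hm ht
  rw [integrable_prod_iff' (by unfold temperedKernel; fun_prop)]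
  simp only [Function.uncurry_apply_pair]
  constructor
  · filter_upwards [ae_restrict_mem measurableSet_Ioc] with t ht
    exact (integrableOn_rpow_mul_exp_neg_mul_Ioi (by linarith)
      (hb t (Ioc_subset_Icc_self ht))).const_mul (1 - t)
  · have hcont : ContinuousOn (fun t => (1 - t) * (Gamma (2 - a) * (l + t * (m - l)) ^ (a - 2)))
        (Icc 0 1) := by
      refine ContinuousOn.mul (by fun_prop) (continuousOn_const.mul ?_)
      exact ContinuousOn.rpow_const (by fun_prop) fun t ht => Or.inl (hb t ht).ne'
    refine (hcont.integrableOn_Icc.mono_set Ioc_subset_Icc_self).congr_fun (fun t ht => ?_)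
      measurableSet_Ioc
    refine (integral_temperedKernel ha hl hm (Ioc_subset_Icc_self ht)).symm.trans
      (setIntegral_congr_fun measurableSet_Ioi fun x hx => (norm_of_nonneg ?_).symm)
    have := rpow_nonneg (le_of_lt (mem_Ioi.1 hx)) (1 - a)
    have := sub_nonneg.2 ht.2
    unfold temperedKernel
    positivity

theorem exp_taylor_remainder_mul_rpow_eq_integral_temperedKernel {a l m x : ℝ} (hx : 0 < x) :
    (exp (-(l * x)) * (-(l - m) * x - 1) + exp (-(m * x))) * x ^ (-a - 1)
      = (m - l) ^ 2 * ∫ t in Ioc (0:ℝ) 1, temperedKernel a l m x t := by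
  have hx₂ : x ^ (1 - a) = x ^ 2 * x ^ (-a - 1) := by
    rw [← rpow_two, ← rpow_add hx]
    ring_nf
  have hexp := exp_add_sub_exp_sub_mul_eq_integral (-(l * x)) ((l - m) * x)
  rw [show -(l * x) + (l - m) * x = -(m * x) by ring] at hexp
  calc (exp (-(l * x)) * (-(l - m) * x - 1) + exp (-(m * x))) * x ^ (-a - 1)
      = (exp (-(m * x)) - exp (-(l * x)) - exp (-(l * x)) * ((l - m) * x)) * x ^ (-a - 1) := by
        ring
    _ = ∫ t in (0:ℝ)..1, (m - l) ^ 2 * temperedKernel a l m x t := by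
        rw [hexp, ← intervalIntegral.integral_mul_const]
        congr 1 with t
        rw [temperedKernel, hx₂,
          show -(l * x) + t * ((l - m) * x) = -((l + t * (m - l)) * x) by ring]
        ring
    _ = _ := by
        rw [intervalIntegral.integral_const_mul, intervalIntegral.integral_of_le zero_le_one]

/-- Positive half-line building block of the Kullback–Leibler divergence between
two exponentially tempered stable (GTS/CTS) Lévy processes. -/
theorem gts_kl_divergence_halfline (a l m : ℝ)
    (ha₀ : 0 < a) (ha₂ : a < 2) (ha₁ : a ≠ 1) (hl : 0 < l) (hm : 0 < m) :
    IntegrableOn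
      (fun x : ℝ =>
        (exp (-(l * x)) * (-(l - m) * x - 1) + exp (-(m * x))) * x ^ (-a - 1))
      (Ioi 0) ∧
    ∫ x in Ioi (0:ℝ),
        (exp (-(l * x)) * (-(l - m) * x - 1) + exp (-(m * x))) * x ^ (-a - 1)
      = Gamma (-a) * ((a - 1) * l ^ a - a * m * l ^ (a - 1) + m ^ a) := by
  have hK := integrable_uncurry_temperedKernel ha₂ hl hm
  have hpt : EqOn _ (fun x => (m - l) ^ 2 * ∫ t in Ioc (0:ℝ) 1, temperedKernel a l m x t)
      (Ioi 0) := fun x hx => exp_taylor_remainder_mul_rpow_eq_integral_temperedKernel hx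
  refine ⟨IntegrableOn.congr_fun (hK.integral_prod_left.const_mul _) hpt.symm measurableSet_Ioi,
    ?_⟩
  have hGamma : Gamma (2 - a) = a * (a - 1) * Gamma (-a) := by
    rw [show 2 - a = (-a + 1) + 1 by ring, Gamma_add_one (fun h => ha₁ (by linarith)),
      Gamma_add_one (neg_ne_zero.2 ha₀.ne')]
    ring
  calc _ = (m - l) ^ 2 * ∫ x in Ioi 0, ∫ t in Ioc 0 1, temperedKernel a l m x t := by
        rw [setIntegral_congr_fun measurableSet_Ioi hpt, integral_const_mul]
    _ = (m - l) ^ 2 * ∫ t in Ioc 0 1, ∫ x in Ioi 0, temperedKernel a l m x t := by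
        rw [integral_integral_swap hK]
    _ = Gamma (2 - a) *
          ∫ t in (0:ℝ)..1, (m - l) ^ 2 * (1 - t) * (l + t * (m - l)) ^ (a - 2) := by
        rw [setIntegral_congr_fun measurableSet_Ioc fun t ht =>
            integral_temperedKernel ha₂ hl hm (Ioc_subset_Icc_self ht),
          intervalIntegral.integral_of_le zero_le_one, ← integral_const_mul,
          ← integral_const_mul]
        congr 1 with t
        ring
    _ = _ := by
        rw [← rpow_taylor_remainder_eq_integral ha₀.ne' ha₁ hl hm, hGamma,
          rpow_sub_one hl.ne']
        field_simp
        ring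
end

section
/- Let a ∈ ℝ and let λ > 0, μ > 0. Then the limit as α → −1 of (4/(1−α²))·( ((1−α)/2)·λ^a + ((1+α)/2)·μ^a − ( ((1−α)/2)·λ + ((1+α)/2)·μ )^a ) exists and equals (a−1)·λ^a − a·μ·λ^{a−1} + μ^a. -/
open Filter Real

/-- As α → −1, the closed-form α-divergence building block converges to the
closed-form Kullback–Leibler building block. -/
theorem alpha_div_tendsto_kl (a l m : ℝ) (hl : 0 < l) (hm : 0 < m) :
    Filter.Tendsto
      (fun α : ℝ => (4 / (1 - α ^ 2)) *
        (((1 - α) / 2) * l ^ a + ((1 + α) / 2) * m ^ a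
          - (((1 - α) / 2) * l + ((1 + α) / 2) * m) ^ a))
      (nhdsWithin (-1) {(-1)}ᶜ)
      (nhds ((a - 1) * l ^ a - a * m * l ^ (a - 1) + m ^ a)) := by
  set g : ℝ → ℝ := fun α => ((1 - α) / 2) * l ^ a + ((1 + α) / 2) * m ^ a
      - (((1 - α) / 2) * l + ((1 + α) / 2) * m) ^ a with hgdef
  have hg0 : g (-1) = 0 := by simp [hgdef]
  -- derivative of the inner affine map
  have hinner : HasDerivAt (fun α : ℝ => ((1 - α) / 2) * l + ((1 + α) / 2) * m)
      ((-1/2) * l + (1/2) * m) (-1) := by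
    have h1 : HasDerivAt (fun α : ℝ => ((1 - α) / 2) * l) ((-1/2) * l) (-1) := by
      simpa using (((hasDerivAt_id (-1:ℝ)).const_sub 1).div_const 2).mul_const l
    have h2 : HasDerivAt (fun α : ℝ => ((1 + α) / 2) * m) ((1/2) * m) (-1) := by
      simpa using (((hasDerivAt_id (-1:ℝ)).const_add 1).div_const 2).mul_const m
    exact h1.add h2
  have hval : ((1 - (-1:ℝ)) / 2) * l + ((1 + (-1:ℝ)) / 2) * m = l := by norm_num
  have hpow : HasDerivAt (fun α : ℝ => (((1 - α) / 2) * l + ((1 + α) / 2) * m) ^ a)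
      (((-1/2) * l + (1/2) * m) * a * l ^ (a - 1)) (-1) := by
    have := hinner.rpow_const (p := a) (by left; rw [hval]; exact ne_of_gt hl)
    rwa [hval] at this
  have h1 : HasDerivAt (fun α : ℝ => ((1 - α) / 2) * l ^ a) ((-1/2) * l ^ a) (-1) := by
    simpa using (((hasDerivAt_id (-1:ℝ)).const_sub 1).div_const 2).mul_const (l ^ a)
  have h2 : HasDerivAt (fun α : ℝ => ((1 + α) / 2) * m ^ a) ((1/2) * m ^ a) (-1) := by
    simpa using (((hasDerivAt_id (-1:ℝ)).const_add 1).div_const 2).mul_const (m ^ a)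
  have hg : HasDerivAt g
      ((-1/2) * l ^ a + (1/2) * m ^ a - ((-1/2) * l + (1/2) * m) * a * l ^ (a - 1)) (-1) :=
    (h1.add h2).sub hpow
  have hslope := hasDerivAt_iff_tendsto_slope.mp hg
  -- 4/(1-α) → 2
  have hfrac : Filter.Tendsto (fun α : ℝ => 4 / (1 - α)) (nhdsWithin (-1) {(-1)}ᶜ)
      (nhds 2) := by
    have hc : ContinuousAt (fun α : ℝ => 4 / (1 - α)) (-1) :=
      ContinuousAt.div continuousAt_const (by fun_prop) (by norm_num)
    have := hc.continuousWithinAt (s := {(-1:ℝ)}ᶜ)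
    simpa [ContinuousWithinAt] using (by norm_num : (4:ℝ) / (1 - (-1)) = 2) ▸ this
  have hmul := hfrac.mul hslope
  have hlim : (2:ℝ) * ((-1/2) * l ^ a + (1/2) * m ^ a
      - ((-1/2) * l + (1/2) * m) * a * l ^ (a - 1))
      = (a - 1) * l ^ a - a * m * l ^ (a - 1) + m ^ a := by
    have hll : l * l ^ (a - 1) = l ^ a := by
      have h := (Real.rpow_add hl 1 (a - 1)).symm
      rw [Real.rpow_one] at h
      rw [h]
      congr 1
      ring
    linear_combination a * hll
  rw [hlim] at hmul
  refine hmul.congr' ?_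
  filter_upwards [self_mem_nhdsWithin] with α (hα : α ≠ -1)
  have hsq : (1:ℝ) - α ^ 2 = (1 - α) * (α - (-1)) := by ring
  rw [slope_def_field, hg0, sub_zero, div_mul_div_comm, div_mul_eq_mul_div, hsq]
end

section
/- Let a ∈ ℝ and let λ > 0, μ > 0. Then the limit as α → 1 of (4/(1−α²))·( ((1−α)/2)·λ^a + ((1+α)/2)·μ^a − ( ((1−α)/2)·λ + ((1+α)/2)·μ )^a ) exists and equals (a−1)·μ^a − a·λ·μ^{a−1} + λ^a. -/
/-!
The bracket is the Jensen gap `g α` of `f = (· ^ a)` along the path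
`α ↦ (1 - α)/2 · l + (1 + α)/2 · m`, which ends at `m` for `α = 1`, so `g 1 = 0`. Since
`4 / (1 - α²) = -4 / (1 + α) · 1 / (α - 1)`, the expression is `-4 / (1 + α)` times a difference
quotient of `g` at `1`, hence tends to `-2 g'(1) = f l - f m - f' m · (l - m)`, the Bregman
divergence of `f`; for `f = (· ^ a)` this is the stated closed form.
-/

open Filter Topology

lemma hasDerivAt_midpoint_path (c d x : ℝ) :
    HasDerivAt (fun α : ℝ => (1 - α) / 2 * c + (1 + α) / 2 * d) ((d - c) / 2) x := by
  have h_affine : (fun α : ℝ => (1 - α) / 2 * c + (1 + α) / 2 * d)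
      = fun α => (c + d) / 2 + α * ((d - c) / 2) := by
    ext α; ring
  rw [h_affine]
  exact (((hasDerivAt_id' x).mul_const _).const_add _).congr_deriv (one_mul _)

-- At `α = -1` both sides are `0`, by the convention `x / 0 = 0`.
lemma div_one_sub_sq_mul_eq_slope {g : ℝ → ℝ} (hg : g 1 = 0) (α : ℝ) :
    4 / (1 - α ^ 2) * g α = -4 / (1 + α) * slope g 1 α := by
  rw [slope_def_field, hg, sub_zero, ← neg_sub 1 α, show 1 - α ^ 2 = (1 + α) * (1 - α) by ring]
  simp only [div_eq_mul_inv, mul_inv, inv_neg]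
  ring

lemma tendsto_div_one_sub_sq_mul {g : ℝ → ℝ} {g' : ℝ} (hg : HasDerivAt g g' 1) (hg1 : g 1 = 0) :
    Tendsto (fun α : ℝ => 4 / (1 - α ^ 2) * g α) (𝓝[≠] 1) (𝓝 (-2 * g')) := by
  have hfactor : Tendsto (fun α : ℝ => -4 / (1 + α)) (𝓝[≠] 1) (𝓝 (-2)) := by
    refine tendsto_nhdsWithin_of_tendsto_nhds ?_
    have h : Tendsto (fun α : ℝ => -4 / (1 + α)) (𝓝 1) (𝓝 (-4 / (1 + 1))) :=
      tendsto_const_nhds.div (tendsto_id.const_add 1) (by norm_num)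
    norm_num at h
    exact h
  simp only [div_one_sub_sq_mul_eq_slope hg1]
  exact hfactor.mul (hasDerivAt_iff_tendsto_slope.mp hg)

section JensenGap

variable {f : ℝ → ℝ} {f' m : ℝ}

lemma hasDerivAt_jensen_gap (hf : HasDerivAt f f' m) (l : ℝ) :
    HasDerivAt (fun α : ℝ => (1 - α) / 2 * f l + (1 + α) / 2 * f m
        - f ((1 - α) / 2 * l + (1 + α) / 2 * m))
      ((f m - f l) / 2 - f' * ((m - l) / 2)) 1 :=
  (hasDerivAt_midpoint_path (f l) (f m) 1).sub
    (hf.comp_of_eq 1 (hasDerivAt_midpoint_path l m 1) (by ring))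

lemma tendsto_jensen_gap_div_one_sub_sq (hf : HasDerivAt f f' m) (l : ℝ) :
    Tendsto (fun α : ℝ => 4 / (1 - α ^ 2) *
        ((1 - α) / 2 * f l + (1 + α) / 2 * f m - f ((1 - α) / 2 * l + (1 + α) / 2 * m)))
      (𝓝[≠] 1) (𝓝 (f l - f m - f' * (l - m))) := by
  convert tendsto_div_one_sub_sq_mul (hasDerivAt_jensen_gap hf l) (by norm_num) using 2
  ring

end JensenGap

theorem alpha_div_tendsto_dual_kl_general (a l m : ℝ) (hm : 0 < m) :
    Filter.Tendsto
      (fun α : ℝ => (4 / (1 - α ^ 2)) *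
        (((1 - α) / 2) * l ^ a + ((1 + α) / 2) * m ^ a
          - (((1 - α) / 2) * l + ((1 + α) / 2) * m) ^ a))
      (nhdsWithin 1 {(1:ℝ)}ᶜ)
      (nhds ((a - 1) * m ^ a - a * l * m ^ (a - 1) + l ^ a)) := by
  have hpow : HasDerivAt (fun x : ℝ => x ^ a) (a * m ^ (a - 1)) m :=
    Real.hasDerivAt_rpow_const (Or.inl hm.ne')
  convert tendsto_jensen_gap_div_one_sub_sq hpow l using 2
  rw [Real.rpow_sub_one hm.ne']
  field_simp
  ring

/-- As α → 1, the closed-form α-divergence building block converges to the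
closed-form dual Kullback–Leibler building block. -/
theorem alpha_div_tendsto_dual_kl (a l m : ℝ) (hl : 0 < l) (hm : 0 < m) :
    Filter.Tendsto
      (fun α : ℝ => (4 / (1 - α ^ 2)) *
        (((1 - α) / 2) * l ^ a + ((1 + α) / 2) * m ^ a
          - (((1 - α) / 2) * l + ((1 + α) / 2) * m) ^ a))
      (nhdsWithin 1 {(1:ℝ)}ᶜ)
      (nhds ((a - 1) * m ^ a - a * l * m ^ (a - 1) + l ^ a)) :=
  alpha_div_tendsto_dual_kl_general a l m hm
end

section
/- Let a ∈ (0,2) with a ≠ 1, let λ > 0 and μ > 0, and let p, q be real numbers with p + q = 1 and pλ + qμ > 0. Then the function x ↦ (p·exp(−λx²/2) + q·exp(−μx²/2) − exp(−(pλ+qμ)x²/2))·x^(−a−1) is integrable on (0,∞) and ∫₀^∞ (p·exp(−λx²/2) + q·exp(−μx²/2) − exp(−(pλ+qμ)x²/2))·x^(−a−1) dx = 2^{−1−a/2}·Γ(−a/2)·(p·λ^{a/2} + q·μ^{a/2} − (pλ+qμ)^{a/2}). -/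
/-!
Since `p + q = 1`, the integrand is `p g_l + q g_m - g_{pl+qm}` with
`g_t x = (exp (-t x² / 2) - 1) x^(-a-1)`, so it suffices to treat one `g_t`. More generally,
for `-p < s < 0` the function `(exp (-b x^p) - 1) x^(s-1)` is `O(x^(p+s-1))` at `0` and
`O(x^(s-1))` at `∞`, hence integrable, and integrating by parts against `x^s / s` (the boundary
terms vanish by the same two bounds) turns its integral into `(b p / s) ∫ x^(p+s-1) exp (-b x^p)`,
a Gamma integral at `s/p + 1`; then `Γ(s/p + 1) = (s/p) Γ(s/p)` gives `b^(-s/p) Γ(s/p) / p`.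
-/

open MeasureTheory Real Set Filter Topology

lemma abs_exp_neg_sub_one_le_s11 {y : ℝ} (hy : 0 ≤ y) : |exp (-y) - 1| ≤ y := by
  rw [abs_sub_comm, abs_of_nonneg (sub_nonneg.2 (exp_le_one_iff.2 (neg_nonpos.2 hy)))]
  linarith [one_sub_le_exp_neg y]

lemma abs_exp_neg_sub_one_le_one {y : ℝ} (hy : 0 ≤ y) : |exp (-y) - 1| ≤ 1 := by
  rw [abs_sub_comm, abs_of_nonneg (sub_nonneg.2 (exp_le_one_iff.2 (neg_nonpos.2 hy)))]
  linarith [exp_pos (-y)]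

section

variable {b p r s x : ℝ}

lemma norm_exp_neg_mul_rpow_sub_one_mul_rpow_le (hb : 0 ≤ b) (hx : 0 < x) :
    ‖(exp (-b * x ^ p) - 1) * x ^ r‖ ≤ b * x ^ (p + r) := by
  rw [norm_mul, norm_of_nonneg (rpow_nonneg hx.le r), rpow_add hx, ← mul_assoc, neg_mul]
  gcongr
  exact abs_exp_neg_sub_one_le_s11 (by positivity)

lemma norm_exp_neg_mul_rpow_sub_one_mul_rpow_le_rpow (hb : 0 ≤ b) (hx : 0 < x) :
    ‖(exp (-b * x ^ p) - 1) * x ^ r‖ ≤ x ^ r := by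
  rw [norm_mul, norm_of_nonneg (rpow_nonneg hx.le r), neg_mul]
  exact mul_le_of_le_one_left (rpow_nonneg hx.le r) (abs_exp_neg_sub_one_le_one (by positivity))

lemma integrableOn_exp_neg_mul_rpow_sub_one_mul_rpow (hb : 0 ≤ b) (hps : -p < s) (hs : s < 0) :
    IntegrableOn (fun x => (exp (-b * x ^ p) - 1) * x ^ (s - 1)) (Ioi 0) := by
  have hmeas : AEStronglyMeasurable (fun x => (exp (-b * x ^ p) - 1) * x ^ (s - 1))
      (volume.restrict (Ioi 0)) := by
    refine ContinuousOn.aestronglyMeasurable (fun x hx => ?_) measurableSet_Ioi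
    have hx : x ≠ 0 := (mem_Ioi.1 hx).ne'
    fun_prop (disch := exact Or.inl hx)
  rw [← Ioc_union_Ioi_eq_Ioi zero_le_one, integrableOn_union]
  constructor
  · refine Integrable.mono' ((intervalIntegral.intervalIntegrable_rpow'
      (r := p + (s - 1)) (by linarith)).1.const_mul b)
      (hmeas.mono_measure (Measure.restrict_mono Ioc_subset_Ioi_self le_rfl)) ?_
    filter_upwards [ae_restrict_mem measurableSet_Ioc] with x hx
    exact norm_exp_neg_mul_rpow_sub_one_mul_rpow_le hb hx.1
  · refine Integrable.mono' (integrableOn_Ioi_rpow_of_lt (a := s - 1) (by linarith) zero_lt_one)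
      (hmeas.mono_measure (Measure.restrict_mono (Ioi_subset_Ioi zero_le_one) le_rfl)) ?_
    filter_upwards [ae_restrict_mem measurableSet_Ioi] with x hx
    exact norm_exp_neg_mul_rpow_sub_one_mul_rpow_le_rpow hb (zero_lt_one.trans hx)

lemma tendsto_exp_neg_mul_rpow_sub_one_mul_rpow_nhdsGT_zero (hb : 0 ≤ b) (hpr : 0 < p + r) :
    Tendsto (fun x => (exp (-b * x ^ p) - 1) * x ^ r) (𝓝[>] 0) (𝓝 0) := by
  have hlim : Tendsto (fun x : ℝ => b * x ^ (p + r)) (𝓝[>] 0) (𝓝 0) := by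
    have := ((continuousAt_rpow_const 0 (p + r) (Or.inr hpr.le)).tendsto.const_mul b).mono_left
      (nhdsWithin_le_nhds (s := Ioi 0))
    rwa [zero_rpow hpr.ne', mul_zero] at this
  refine squeeze_zero_norm' ?_ hlim
  filter_upwards [self_mem_nhdsWithin] with x hx
  exact norm_exp_neg_mul_rpow_sub_one_mul_rpow_le hb hx

lemma tendsto_exp_neg_mul_rpow_sub_one_mul_rpow_atTop (hb : 0 ≤ b) (hr : r < 0) :
    Tendsto (fun x => (exp (-b * x ^ p) - 1) * x ^ r) atTop (𝓝 0) := by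
  have hlim : Tendsto (fun x : ℝ => x ^ r) atTop (𝓝 0) := by
    simpa using tendsto_rpow_neg_atTop (neg_pos.2 hr)
  refine squeeze_zero_norm' ?_ hlim
  filter_upwards [eventually_gt_atTop 0] with x hx
  exact norm_exp_neg_mul_rpow_sub_one_mul_rpow_le_rpow hb hx

lemma integral_exp_neg_mul_rpow_sub_one_mul_rpow (hb : 0 < b) (hp : 0 < p) (hps : -p < s)
    (hs : s < 0) :
    ∫ x in Ioi 0, (exp (-b * x ^ p) - 1) * x ^ (s - 1)
      = b ^ (-s / p) * (1 / p) * Gamma (s / p) := by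
  have hs0 : s ≠ 0 := hs.ne
  set u : ℝ → ℝ := fun x => exp (-b * x ^ p) - 1
  set u' : ℝ → ℝ := fun x => exp (-b * x ^ p) * (-b * (p * x ^ (p - 1)))
  set v : ℝ → ℝ := fun x => x ^ s / s
  have hu : ∀ x ∈ Ioi (0 : ℝ), HasDerivAt u (u' x) x := fun x hx =>
    (((hasDerivAt_rpow_const (Or.inl (mem_Ioi.1 hx).ne')).const_mul (-b)).exp).sub_const 1
  have hv : ∀ x ∈ Ioi (0 : ℝ), HasDerivAt v (x ^ (s - 1)) x := fun x hx =>
    ((hasDerivAt_rpow_const (Or.inl (mem_Ioi.1 hx).ne')).div_const s).congr_deriv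
      (mul_div_cancel_left₀ _ hs0)
  have hu'v : EqOn (fun x => u' x * v x)
      (fun x => -(b * p / s) * (x ^ (p + s - 1) * exp (-b * x ^ p))) (Ioi 0) := fun x hx => by
    simp only [u', v, add_sub_right_comm, rpow_add (mem_Ioi.1 hx)]
    field_simp
  have huv : ∀ l, Tendsto (fun x => (exp (-b * x ^ p) - 1) * x ^ s) l (𝓝 0) →
      Tendsto (fun x => u x * v x) l (𝓝 0) := fun l h => by
    simpa only [zero_div, mul_div_assoc] using h.div_const s
  have hgamma : ∫ x in Ioi 0, x ^ (p + s - 1) * exp (-b * x ^ p)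
      = b ^ (-(p + s) / p) * (1 / p) * Gamma (s / p + 1) := by
    rw [integral_rpow_mul_exp_neg_mul_rpow hp (by linarith) hb, sub_add_cancel, add_div,
      div_self hp.ne', add_comm 1]
  have hibp := integral_Ioi_mul_deriv_eq_deriv_mul hu hv
    (integrableOn_exp_neg_mul_rpow_sub_one_mul_rpow hb.le hps hs)
    (IntegrableOn.congr_fun
      ((integrableOn_rpow_mul_exp_neg_mul_rpow (s := p + s - 1) (by linarith) hp hb).const_mul _)
      hu'v.symm measurableSet_Ioi)
    (huv _ (tendsto_exp_neg_mul_rpow_sub_one_mul_rpow_nhdsGT_zero hb.le (by linarith)))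
    (huv _ (tendsto_exp_neg_mul_rpow_sub_one_mul_rpow_atTop hb.le hs))
  calc ∫ x in Ioi 0, (exp (-b * x ^ p) - 1) * x ^ (s - 1)
      = b * p / s * ∫ x in Ioi 0, x ^ (p + s - 1) * exp (-b * x ^ p) := by
        rw [hibp, setIntegral_congr_fun measurableSet_Ioi hu'v, integral_const_mul]
        ring
    _ = b ^ (-s / p) * (1 / p) * Gamma (s / p) := by
        rw [hgamma, Gamma_add_one (div_ne_zero hs0 hp.ne'),
          show -(p + s) / p = -s / p - 1 by field_simp; ring, rpow_sub_one hb.ne']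
        field_simp

end

lemma exp_neg_mul_sq_div_two_eq (t x : ℝ) :
    exp (-(t * x ^ 2 / 2)) = exp (-(t / 2) * x ^ (2 : ℝ)) := by
  rw [rpow_two]
  ring_nf

section

variable {a t : ℝ}

lemma integrableOn_exp_neg_mul_sq_div_two_sub_one_mul_rpow (ht : 0 ≤ t) (ha₀ : 0 < a)
    (ha₂ : a < 2) :
    IntegrableOn (fun x => (exp (-(t * x ^ 2 / 2)) - 1) * x ^ (-a - 1)) (Ioi 0) := by
  simp_rw [exp_neg_mul_sq_div_two_eq]
  exact integrableOn_exp_neg_mul_rpow_sub_one_mul_rpow (by positivity) (by linarith) (by linarith)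

lemma integral_exp_neg_mul_sq_div_two_sub_one_mul_rpow (ht : 0 < t) (ha₀ : 0 < a)
    (ha₂ : a < 2) :
    ∫ x in Ioi 0, (exp (-(t * x ^ 2 / 2)) - 1) * x ^ (-a - 1)
      = 2 ^ (-1 - a / 2) * Gamma (-(a / 2)) * t ^ (a / 2) := by
  simp_rw [exp_neg_mul_sq_div_two_eq]
  rw [integral_exp_neg_mul_rpow_sub_one_mul_rpow (by positivity) two_pos (by linarith)
    (by linarith), neg_neg, neg_div, div_rpow ht.le zero_le_two, sub_eq_add_neg,
    rpow_add two_pos, rpow_neg_one, rpow_neg zero_le_two]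
  field_simp

end

theorem rdts_alpha_divergence_halfline_general (a l m p q : ℝ)
    (ha₀ : 0 < a) (ha₂ : a < 2)
    (hl : 0 < l) (hm : 0 < m) (hpq : p + q = 1) (hmix : 0 < p * l + q * m) :
    IntegrableOn
      (fun x : ℝ =>
        (p * exp (-(l * x ^ 2 / 2)) + q * exp (-(m * x ^ 2 / 2))
          - exp (-((p * l + q * m) * x ^ 2 / 2))) * x ^ (-a - 1)) (Ioi 0) ∧
    ∫ x in Ioi (0:ℝ),
        (p * exp (-(l * x ^ 2 / 2)) + q * exp (-(m * x ^ 2 / 2))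
          - exp (-((p * l + q * m) * x ^ 2 / 2))) * x ^ (-a - 1)
      = (2:ℝ) ^ (-1 - a / 2) * Gamma (-(a / 2)) *
          (p * l ^ (a / 2) + q * m ^ (a / 2) - (p * l + q * m) ^ (a / 2)) := by
  set c := p * l + q * m
  have hsplit : (fun x : ℝ =>
      (p * exp (-(l * x ^ 2 / 2)) + q * exp (-(m * x ^ 2 / 2))
        - exp (-(c * x ^ 2 / 2))) * x ^ (-a - 1))
      = fun x =>
        p * ((exp (-(l * x ^ 2 / 2)) - 1) * x ^ (-a - 1))
          + q * ((exp (-(m * x ^ 2 / 2)) - 1) * x ^ (-a - 1))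
          - (exp (-(c * x ^ 2 / 2)) - 1) * x ^ (-a - 1) := by
    funext x
    linear_combination x ^ (-a - 1) * hpq
  have hl' := integrableOn_exp_neg_mul_sq_div_two_sub_one_mul_rpow hl.le ha₀ ha₂
  have hm' := integrableOn_exp_neg_mul_sq_div_two_sub_one_mul_rpow hm.le ha₀ ha₂
  have hc' := integrableOn_exp_neg_mul_sq_div_two_sub_one_mul_rpow hmix.le ha₀ ha₂
  have hlm : IntegrableOn (fun x => p * ((exp (-(l * x ^ 2 / 2)) - 1) * x ^ (-a - 1))
      + q * ((exp (-(m * x ^ 2 / 2)) - 1) * x ^ (-a - 1))) (Ioi 0) :=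
    (hl'.const_mul p).add (hm'.const_mul q)
  rw [hsplit]
  refine ⟨hlm.sub hc', ?_⟩
  rw [integral_sub hlm hc', integral_add (hl'.const_mul p) (hm'.const_mul q), integral_const_mul,
    integral_const_mul, integral_exp_neg_mul_sq_div_two_sub_one_mul_rpow hl ha₀ ha₂,
    integral_exp_neg_mul_sq_div_two_sub_one_mul_rpow hm ha₀ ha₂,
    integral_exp_neg_mul_sq_div_two_sub_one_mul_rpow hmix ha₀ ha₂]
  ring

/-- Positive half-line building block of the α-divergence between two
rapidly-decreasing tempered stable (RDTS) Lévy processes. -/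
theorem rdts_alpha_divergence_halfline (a l m p q : ℝ)
    (ha₀ : 0 < a) (ha₂ : a < 2) (ha₁ : a ≠ 1)
    (hl : 0 < l) (hm : 0 < m) (hpq : p + q = 1) (hmix : 0 < p * l + q * m) :
    IntegrableOn
      (fun x : ℝ =>
        (p * exp (-(l * x ^ 2 / 2)) + q * exp (-(m * x ^ 2 / 2))
          - exp (-((p * l + q * m) * x ^ 2 / 2))) * x ^ (-a - 1)) (Ioi 0) ∧
    ∫ x in Ioi (0:ℝ),
        (p * exp (-(l * x ^ 2 / 2)) + q * exp (-(m * x ^ 2 / 2))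
          - exp (-((p * l + q * m) * x ^ 2 / 2))) * x ^ (-a - 1)
      = (2:ℝ) ^ (-1 - a / 2) * Gamma (-(a / 2)) *
          (p * l ^ (a / 2) + q * m ^ (a / 2) - (p * l + q * m) ^ (a / 2)) :=
  rdts_alpha_divergence_halfline_general a l m p q ha₀ ha₂ hl hm hpq hmix
end

section
/- Let a ∈ (0,2) with a ≠ 1 and let λ > 0, μ > 0. Then the function x ↦ (exp(−λx²/2)·(−((λ−μ)/2)·x² − 1) + exp(−μx²/2))·x^(−a−1) is integrable on (0,∞) and ∫₀^∞ (exp(−λx²/2)·(−((λ−μ)/2)·x² − 1) + exp(−μx²/2))·x^(−a−1) dx = 2^{−1−a/2}·Γ(−a/2)·( (a/2 − 1)·λ^{a/2} − (a/2)·μ·λ^{a/2−1} + μ^{a/2} ). -/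
open MeasureTheory Real Set Filter Topology

/-! With `c = l/2` and `d = m/2` the integrand splits as
`-(c - d) x^(1-a) e^(-c x²) + (e^(-d x²) - 1) x^(-a-1) - (e^(-c x²) - 1) x^(-a-1)`.
The first term is a Gaussian moment, hence a Gamma value. Integrating the other two by parts
against `x^(-a) / (-a)` (the boundary terms vanish because `0 < a < 2`) turns
`∫ (e^(-c x²) - 1) x^(-a-1)` into `-(2c/a)` times the same Gaussian moment, and
`Γ(1 - a/2) = -(a/2) Γ(-a/2)` brings everything to `Γ(-a/2)`. -/

lemma abs_exp_neg_sub_one_le_s12 {t : ℝ} (ht : 0 ≤ t) : |exp (-t) - 1| ≤ t := by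
  rw [abs_sub_comm, abs_of_nonneg (sub_nonneg.2 (exp_le_one_iff.2 (neg_nonpos.2 ht)))]
  linarith [add_one_le_exp (-t)]

lemma abs_exp_neg_sub_one_le_one_s12 {t : ℝ} (ht : 0 ≤ t) : |exp (-t) - 1| ≤ 1 := by
  rw [abs_sub_comm, abs_of_nonneg (sub_nonneg.2 (exp_le_one_iff.2 (neg_nonpos.2 ht)))]
  linarith [exp_pos (-t)]

lemma sq_mul_rpow_neg_sub_one {x : ℝ} (hx : 0 < x) (s : ℝ) :
    x ^ 2 * x ^ (-s - 1) = x ^ (1 - s) := by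
  rw [← rpow_two, ← rpow_add hx]
  ring_nf

lemma norm_exp_neg_mul_sq_sub_one_mul_rpow (c r : ℝ) {x : ℝ} (hx : 0 < x) :
    ‖(exp (-c * x ^ 2) - 1) * x ^ r‖ = |exp (-(c * x ^ 2)) - 1| * x ^ r := by
  rw [norm_mul, norm_of_nonneg (rpow_nonneg hx.le _), neg_mul, norm_eq_abs]

lemma integrableOn_Ioi_of_norm_le_rpow {f : ℝ → ℝ} {r s C₀ C₁ : ℝ}
    (hf : ContinuousOn f (Ioi 0)) (hr : -1 < r) (hs : s < -1)
    (h₀ : ∀ x ∈ Ioc 0 1, ‖f x‖ ≤ C₀ * x ^ r)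
    (h₁ : ∀ x ∈ Ioi 1, ‖f x‖ ≤ C₁ * x ^ s) :
    IntegrableOn f (Ioi 0) := by
  rw [← Ioc_union_Ioi_eq_Ioi zero_le_one]
  exact IntegrableOn.union
    (((intervalIntegral.intervalIntegrable_rpow' (a := 0) (b := 1) hr).1.const_mul C₀).mono'
      ((hf.mono Ioc_subset_Ioi_self).aestronglyMeasurable measurableSet_Ioc)
      (ae_restrict_of_forall_mem measurableSet_Ioc h₀))
    (((integrableOn_Ioi_rpow_of_lt hs one_pos).const_mul C₁).mono'
      ((hf.mono (Ioi_subset_Ioi zero_le_one)).aestronglyMeasurable measurableSet_Ioi)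
      (ae_restrict_of_forall_mem measurableSet_Ioi h₁))

lemma integrableOn_exp_neg_mul_sq_sub_one_mul_rpow {c s : ℝ} (hc : 0 ≤ c) (hs₀ : 0 < s)
    (hs₂ : s < 2) :
    IntegrableOn (fun x : ℝ => (exp (-c * x ^ 2) - 1) * x ^ (-s - 1)) (Ioi 0) := by
  refine integrableOn_Ioi_of_norm_le_rpow (C₀ := c) (C₁ := 1) ?_
    (by linarith : -1 < 1 - s) (by linarith : -s - 1 < -1) (fun x hx => ?_) (fun x hx => ?_)
  · exact fun x hx => ContinuousAt.continuousWithinAt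
      (by fun_prop (disch := exact Or.inl (ne_of_gt hx)))
  · calc _ = |exp (-(c * x ^ 2)) - 1| * x ^ (-s - 1) :=
          norm_exp_neg_mul_sq_sub_one_mul_rpow c _ hx.1
      _ ≤ c * x ^ 2 * x ^ (-s - 1) :=
        mul_le_mul_of_nonneg_right (abs_exp_neg_sub_one_le_s12 (by positivity))
          (rpow_nonneg hx.1.le _)
      _ = c * x ^ (1 - s) := by rw [mul_assoc, sq_mul_rpow_neg_sub_one hx.1]
  · have hx₀ : (0 : ℝ) < x := one_pos.trans hx
    calc _ = |exp (-(c * x ^ 2)) - 1| * x ^ (-s - 1) :=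
          norm_exp_neg_mul_sq_sub_one_mul_rpow c _ hx₀
      _ ≤ 1 * x ^ (-s - 1) :=
        mul_le_mul_of_nonneg_right (abs_exp_neg_sub_one_le_one_s12 (by positivity))
          (rpow_nonneg hx₀.le _)

lemma integral_rpow_mul_exp_neg_mul_sq {c q : ℝ} (hc : 0 < c) (hq : -1 < q) :
    ∫ x in Ioi 0, x ^ q * exp (-c * x ^ 2) = c ^ (-(q + 1) / 2) * Gamma ((q + 1) / 2) / 2 := by
  simpa only [rpow_two, mul_one_div, div_mul_eq_mul_div] using
    integral_rpow_mul_exp_neg_mul_rpow two_pos hq hc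

lemma integral_rpow_one_sub_mul_exp_neg_mul_sq {c s : ℝ} (hc : 0 < c) (hs : s ≠ 0)
    (hs₂ : s < 2) :
    ∫ x in Ioi 0, x ^ (1 - s) * exp (-c * x ^ 2) =
      -(s / 4) * c ^ (s / 2 - 1) * Gamma (-(s / 2)) := by
  rw [integral_rpow_mul_exp_neg_mul_sq hc (by linarith), show -(1 - s + 1) / 2 = s / 2 - 1 by ring,
    show (1 - s + 1) / 2 = -(s / 2) + 1 by ring, Gamma_add_one (by simpa using hs)]
  ring

lemma hasDerivAt_exp_neg_mul_sq_sub_one_mul_rpow_div {c s x : ℝ} (hs : s ≠ 0) (hx : 0 < x) :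
    HasDerivAt (fun x => (exp (-c * x ^ 2) - 1) * x ^ (-s) / -s)
      ((exp (-c * x ^ 2) - 1) * x ^ (-s - 1) + 2 * c / s * (x ^ (1 - s) * exp (-c * x ^ 2))) x := by
  have hexp : HasDerivAt (fun x => exp (-c * x ^ 2) - 1) (exp (-c * x ^ 2) * (-c * (2 * x))) x := by
    simpa using (((hasDerivAt_pow 2 x).const_mul (-c)).exp).sub_const 1
  have hpow : HasDerivAt (fun x => x ^ (-s)) (-s * x ^ (-s - 1)) x :=
    hasDerivAt_rpow_const (Or.inl hx.ne')
  refine ((hexp.mul hpow).div_const (-s)).congr_deriv ?_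
  rw [show 1 - s = 1 + -s by ring, rpow_add hx, rpow_one]
  field_simp
  ring

lemma tendsto_exp_neg_mul_sq_sub_one_mul_rpow_nhdsGT_zero {c s : ℝ} (hc : 0 ≤ c)
    (hs₂ : s < 2) :
    Tendsto (fun x : ℝ => (exp (-c * x ^ 2) - 1) * x ^ (-s)) (𝓝[>] 0) (𝓝 0) := by
  have hlim : Tendsto (fun x : ℝ => c * x ^ (2 - s)) (𝓝[>] 0) (𝓝 0) := by
    simpa [zero_rpow (by linarith : 2 - s ≠ 0)] using
      (((continuousAt_rpow_const 0 (2 - s) (Or.inr (by linarith))).tendsto.const_mul c).mono_left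
        nhdsWithin_le_nhds)
  refine squeeze_zero_norm' ?_ hlim
  filter_upwards [self_mem_nhdsWithin] with x (hx : 0 < x)
  calc _ = |exp (-(c * x ^ 2)) - 1| * x ^ (-s) := norm_exp_neg_mul_sq_sub_one_mul_rpow c _ hx
    _ ≤ c * x ^ 2 * x ^ (-s) :=
      mul_le_mul_of_nonneg_right (abs_exp_neg_sub_one_le_s12 (by positivity)) (rpow_nonneg hx.le _)
    _ = c * x ^ (2 - s) := by rw [sub_eq_add_neg, rpow_add hx, rpow_two, mul_assoc]

lemma tendsto_exp_neg_mul_sq_sub_one_mul_rpow_atTop {c s : ℝ} (hc : 0 ≤ c) (hs₀ : 0 < s) :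
    Tendsto (fun x : ℝ => (exp (-c * x ^ 2) - 1) * x ^ (-s)) atTop (𝓝 0) := by
  refine squeeze_zero_norm' ?_ (tendsto_rpow_neg_atTop hs₀)
  filter_upwards [eventually_gt_atTop 0] with x hx
  rw [norm_exp_neg_mul_sq_sub_one_mul_rpow c _ hx]
  exact mul_le_of_le_one_left (rpow_nonneg hx.le _) (abs_exp_neg_sub_one_le_one_s12 (by positivity))

lemma integral_exp_neg_mul_sq_sub_one_mul_rpow {c s : ℝ} (hc : 0 < c) (hs₀ : 0 < s)
    (hs₂ : s < 2) :
    ∫ x in Ioi 0, (exp (-c * x ^ 2) - 1) * x ^ (-s - 1) = c ^ (s / 2) * Gamma (-(s / 2)) / 2 := by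
  set G : ℝ → ℝ := fun x => (exp (-c * x ^ 2) - 1) * x ^ (-s) / -s
  have hG₀ : ContinuousWithinAt G (Ici 0) 0 := by
    rw [← continuousWithinAt_Ioi_iff_Ici, ContinuousWithinAt, show G 0 = 0 by simp [G]]
    simpa only [zero_div] using
      (tendsto_exp_neg_mul_sq_sub_one_mul_rpow_nhdsGT_zero hc.le hs₂).div_const (-s)
  have hG_top : Tendsto G atTop (𝓝 0) := by
    simpa only [zero_div] using
      (tendsto_exp_neg_mul_sq_sub_one_mul_rpow_atTop hc.le hs₀).div_const (-s)
  have hint := integrableOn_exp_neg_mul_sq_sub_one_mul_rpow hc.le hs₀ hs₂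
  have hmoment := (integrableOn_rpow_mul_exp_neg_mul_sq hc (by linarith : -1 < 1 - s)).const_mul
    (2 * c / s)
  have hFTC := integral_Ioi_of_hasDerivAt_of_tendsto hG₀
    (fun x hx => hasDerivAt_exp_neg_mul_sq_sub_one_mul_rpow_div hs₀.ne' hx)
    (hint.add hmoment) hG_top
  rw [integral_add hint hmoment, integral_const_mul,
    integral_rpow_one_sub_mul_exp_neg_mul_sq hc hs₀.ne' hs₂, show G 0 = 0 by simp [G],
    rpow_sub_one hc.ne'] at hFTC
  have hΓ : 2 * c / s * (-(s / 4) * (c ^ (s / 2) / c) * Gamma (-(s / 2)))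
      = -(c ^ (s / 2) * Gamma (-(s / 2)) / 2) := by
    field_simp
    ring
  linarith

theorem rdts_kl_divergence_halfline_general (a l m : ℝ)
    (ha₀ : 0 < a) (ha₂ : a < 2) (hl : 0 < l) (hm : 0 < m) :
    IntegrableOn
      (fun x : ℝ =>
        (exp (-(l * x ^ 2 / 2)) * (-((l - m) / 2) * x ^ 2 - 1) + exp (-(m * x ^ 2 / 2)))
          * x ^ (-a - 1)) (Ioi 0) ∧
    ∫ x in Ioi (0:ℝ),
        (exp (-(l * x ^ 2 / 2)) * (-((l - m) / 2) * x ^ 2 - 1) + exp (-(m * x ^ 2 / 2)))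
          * x ^ (-a - 1)
      = (2:ℝ) ^ (-1 - a / 2) * Gamma (-(a / 2)) *
          ((a / 2 - 1) * l ^ (a / 2) - (a / 2) * m * l ^ (a / 2 - 1) + m ^ (a / 2)) := by
  have hdecomp : ∀ x ∈ Ioi (0 : ℝ),
      (exp (-(l * x ^ 2 / 2)) * (-((l - m) / 2) * x ^ 2 - 1) + exp (-(m * x ^ 2 / 2)))
          * x ^ (-a - 1)
        = -((l - m) / 2) * (x ^ (1 - a) * exp (-(l / 2) * x ^ 2))
          + ((exp (-(m / 2) * x ^ 2) - 1) * x ^ (-a - 1)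
            - (exp (-(l / 2) * x ^ 2) - 1) * x ^ (-a - 1)) := by
    intro x hx
    simp only [← sq_mul_rpow_neg_sub_one hx, neg_mul, mul_div_right_comm]
    ring
  have hgauss : IntegrableOn (fun x => -((l - m) / 2) * (x ^ (1 - a) * exp (-(l / 2) * x ^ 2)))
      (Ioi 0) :=
    (integrableOn_rpow_mul_exp_neg_mul_sq (half_pos hl) (by linarith)).const_mul _
  have hintm := integrableOn_exp_neg_mul_sq_sub_one_mul_rpow (half_pos hm).le ha₀ ha₂
  have hintl := integrableOn_exp_neg_mul_sq_sub_one_mul_rpow (half_pos hl).le ha₀ ha₂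
  have hdiff : IntegrableOn (fun x => (exp (-(m / 2) * x ^ 2) - 1) * x ^ (-a - 1)
      - (exp (-(l / 2) * x ^ 2) - 1) * x ^ (-a - 1)) (Ioi 0) := hintm.sub hintl
  refine ⟨(hgauss.add hdiff).congr_fun (fun x hx => (hdecomp x hx).symm) measurableSet_Ioi, ?_⟩
  rw [setIntegral_congr_fun measurableSet_Ioi hdecomp, integral_add hgauss hdiff,
    integral_sub hintm hintl, integral_const_mul,
    integral_rpow_one_sub_mul_exp_neg_mul_sq (half_pos hl) ha₀.ne' ha₂,
    integral_exp_neg_mul_sq_sub_one_mul_rpow (half_pos hm) ha₀ ha₂,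
    integral_exp_neg_mul_sq_sub_one_mul_rpow (half_pos hl) ha₀ ha₂,
    rpow_sub_one (half_pos hl).ne', rpow_sub_one hl.ne', rpow_sub two_pos, rpow_neg_one,
    div_rpow hl.le zero_le_two, div_rpow hm.le zero_le_two]
  field_simp
  ring

/-- Positive half-line building block of the Kullback–Leibler divergence between
two rapidly-decreasing tempered stable (RDTS) Lévy processes. -/
theorem rdts_kl_divergence_halfline (a l m : ℝ)
    (ha₀ : 0 < a) (ha₂ : a < 2) (ha₁ : a ≠ 1) (hl : 0 < l) (hm : 0 < m) :
    IntegrableOn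
      (fun x : ℝ =>
        (exp (-(l * x ^ 2 / 2)) * (-((l - m) / 2) * x ^ 2 - 1) + exp (-(m * x ^ 2 / 2)))
          * x ^ (-a - 1)) (Ioi 0) ∧
    ∫ x in Ioi (0:ℝ),
        (exp (-(l * x ^ 2 / 2)) * (-((l - m) / 2) * x ^ 2 - 1) + exp (-(m * x ^ 2 / 2)))
          * x ^ (-a - 1)
      = (2:ℝ) ^ (-1 - a / 2) * Gamma (-(a / 2)) *
          ((a / 2 - 1) * l ^ (a / 2) - (a / 2) * m * l ^ (a / 2 - 1) + m ^ (a / 2)) :=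
  rdts_kl_divergence_halfline_general a l m ha₀ ha₂ hl hm
end
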